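/- arXiv:2404.08257 — 6 statements merged into one kernel-verified Lean document; each statement's English description precedes it below -/
import Mathlib

section
/- For every (T,R) ∈ D the quantity sin T + cos R is strictly positive, and the map Φ(T,R) = ( log((sin T + cos R)/cos T), sin R/(sin T + cos R) ) is a bijection from D onto ℝ × (0,∞). -/
/-!
Write `a = e^{t̂}`. On `D` the image point `(t̂, r)` satisfies `cos R = a cos T - sin T` and
`sin R = r a cos T`, so `sin² R + cos² R = 1` becomes a linear equation for `tan T` with the solution
`tan T = (a² (1 + r²) - 1) / (2a)`. Hence `T = arctan (…)` and then `R = arccos (a cos T - sin T)`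
are recovered from `(t̂, r)`, and for every `t̂` and `r > 0` these formulas produce a point of `D`.
The condition `T > R - π/2` is exactly `sin T + cos R > 0`, by monotonicity of `sin`.
-/

open Real Set

/-- The domain `D` in the `(T,R)` plane. -/
def FLRWDomain : Set (ℝ × ℝ) :=
  {q : ℝ × ℝ | -(π/2) < q.1 ∧ q.1 < π/2 ∧ 0 < q.2 ∧ q.2 < π ∧ q.1 > q.2 - π/2}

/-- The coordinate change `Φ(T,R) = (t̂, r)`. -/
noncomputable def FLRWPhi : ℝ × ℝ → ℝ × ℝ :=
  fun q => (Real.log ((Real.sin q.1 + Real.cos q.2) / Real.cos q.1),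
            Real.sin q.2 / (Real.sin q.1 + Real.cos q.2))

lemma sin_add_cos_pos_iff {T R : ℝ} (hT : T ∈ Icc (-(π / 2)) (π / 2)) (hR : R ∈ Icc 0 π) :
    0 < sin T + cos R ↔ R - π / 2 < T := by
  have hR' : R - π / 2 ∈ Icc (-(π / 2)) (π / 2) := ⟨by linarith [hR.1], by linarith [hR.2]⟩
  rw [← strictMonoOn_sin.lt_iff_lt hR' hT, sin_sub_pi_div_two]
  constructor <;> intro h <;> linarith

lemma tan_eq_iff_sq_add_sq_eq_one {a r T : ℝ} (ha : a ≠ 0) (hT : cos T ≠ 0) :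
    tan T = (a ^ 2 * (1 + r ^ 2) - 1) / (2 * a) ↔
      (a * cos T - sin T) ^ 2 + (r * a * cos T) ^ 2 = 1 := by
  have hpyth := sin_sq_add_cos_sq T
  rw [tan_eq_sin_div_cos, div_eq_div_iff hT (mul_ne_zero two_ne_zero ha)]
  constructor
  · intro h
    linear_combination hpyth - cos T * h
  · intro h
    refine mul_left_cancel₀ hT ?_
    linear_combination hpyth - h

lemma sin_arccos_of_sq_add_sq_eq_one {x y : ℝ} (hy : 0 ≤ y) (h : x ^ 2 + y ^ 2 = 1) :
    sin (arccos x) = y := by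
  rw [sin_arccos, show 1 - x ^ 2 = y ^ 2 by linarith, sqrt_sq hy]

lemma cos_fst_pos_of_mem_FLRWDomain {q : ℝ × ℝ} (hq : q ∈ FLRWDomain) : 0 < cos q.1 :=
  cos_pos_of_mem_Ioo ⟨hq.1, hq.2.1⟩

lemma sin_add_cos_pos_of_mem_FLRWDomain {q : ℝ × ℝ} (hq : q ∈ FLRWDomain) :
    0 < sin q.1 + cos q.2 :=
  (sin_add_cos_pos_iff ⟨hq.1.le, hq.2.1.le⟩ ⟨hq.2.2.1.le, hq.2.2.2.1.le⟩).2 hq.2.2.2.2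

lemma mapsTo_FLRWPhi : MapsTo FLRWPhi FLRWDomain (univ ×ˢ Ioi 0) := fun _ hq =>
  ⟨trivial, div_pos (sin_pos_of_pos_of_lt_pi hq.2.2.1 hq.2.2.2.1)
    (sin_add_cos_pos_of_mem_FLRWDomain hq)⟩

noncomputable def FLRWPhiInv (p : ℝ × ℝ) : ℝ × ℝ :=
  let T := arctan ((exp p.1 ^ 2 * (1 + p.2 ^ 2) - 1) / (2 * exp p.1))
  (T, arccos (exp p.1 * cos T - sin T))

lemma leftInvOn_FLRWPhiInv : LeftInvOn FLRWPhiInv FLRWPhi FLRWDomain := by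
  rintro ⟨T, R⟩ hq
  have hc : 0 < cos T := cos_fst_pos_of_mem_FLRWDomain (q := (T, R)) hq
  have hA : 0 < sin T + cos R := sin_add_cos_pos_of_mem_FLRWDomain (q := (T, R)) hq
  set a := (sin T + cos R) / cos T
  set r := sin R / (sin T + cos R)
  have hcosR : a * cos T - sin T = cos R := by simp only [a]; field_simp; ring
  have hsinR : r * a * cos T = sin R := by simp only [r, a]; field_simp
  have htan : tan T = (a ^ 2 * (1 + r ^ 2) - 1) / (2 * a) := by
    rw [tan_eq_iff_sq_add_sq_eq_one (div_pos hA hc).ne' hc.ne', hcosR, hsinR, cos_sq_add_sin_sq]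
  have hT : arctan ((a ^ 2 * (1 + r ^ 2) - 1) / (2 * a)) = T :=
    arctan_eq_of_tan_eq htan ⟨hq.1, hq.2.1⟩
  rw [show FLRWPhi (T, R) = (log a, r) from rfl]
  unfold FLRWPhiInv
  dsimp only
  rw [exp_log (div_pos hA hc), hT, hcosR, arccos_cos hq.2.2.1.le hq.2.2.2.1.le]

lemma cos_sin_snd_FLRWPhiInv {p : ℝ × ℝ} (hr : 0 < p.2) :
    cos (FLRWPhiInv p).2 = exp p.1 * cos (FLRWPhiInv p).1 - sin (FLRWPhiInv p).1 ∧
      sin (FLRWPhiInv p).2 = p.2 * exp p.1 * cos (FLRWPhiInv p).1 := by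
  set a := exp p.1
  set T := arctan ((a ^ 2 * (1 + p.2 ^ 2) - 1) / (2 * a))
  have hc : 0 < cos T := cos_arctan_pos _
  have hsq : (a * cos T - sin T) ^ 2 + (p.2 * a * cos T) ^ 2 = 1 :=
    (tan_eq_iff_sq_add_sq_eq_one (exp_pos p.1).ne' hc.ne').1 (tan_arctan _)
  have hy : 0 < p.2 * a * cos T := by positivity
  exact ⟨cos_arccos (by nlinarith) (by nlinarith), sin_arccos_of_sq_add_sq_eq_one hy.le hsq⟩

lemma sin_add_cos_FLRWPhiInv {p : ℝ × ℝ} (hr : 0 < p.2) :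
    sin (FLRWPhiInv p).1 + cos (FLRWPhiInv p).2 = exp p.1 * cos (FLRWPhiInv p).1 := by
  rw [(cos_sin_snd_FLRWPhiInv hr).1]
  ring

lemma mapsTo_FLRWPhiInv : MapsTo FLRWPhiInv (univ ×ˢ Ioi 0) FLRWDomain := by
  rintro p ⟨-, hr : 0 < p.2⟩
  have hT : (FLRWPhiInv p).1 ∈ Ioo (-(π / 2)) (π / 2) := arctan_mem_Ioo _
  have hc : 0 < cos (FLRWPhiInv p).1 := cos_pos_of_mem_Ioo hT
  have hsin : 0 < sin (FLRWPhiInv p).2 := by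
    rw [(cos_sin_snd_FLRWPhiInv hr).2]
    positivity
  have hR : (FLRWPhiInv p).2 ∈ Icc 0 π := ⟨arccos_nonneg _, arccos_le_pi _⟩
  have hR0 : (FLRWPhiInv p).2 ≠ 0 := fun h => by simp [h] at hsin
  have hRπ : (FLRWPhiInv p).2 ≠ π := fun h => by simp [h] at hsin
  have hpos : 0 < sin (FLRWPhiInv p).1 + cos (FLRWPhiInv p).2 := by
    rw [sin_add_cos_FLRWPhiInv hr]
    positivity
  exact ⟨hT.1, hT.2, lt_of_le_of_ne hR.1 (Ne.symm hR0), lt_of_le_of_ne hR.2 hRπ,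
    (sin_add_cos_pos_iff (Ioo_subset_Icc_self hT) hR).1 hpos⟩

lemma rightInvOn_FLRWPhiInv : RightInvOn FLRWPhiInv FLRWPhi (univ ×ˢ Ioi 0) := by
  rintro p ⟨-, hr : 0 < p.2⟩
  have hc : 0 < cos (FLRWPhiInv p).1 := cos_pos_of_mem_Ioo (arctan_mem_Ioo _)
  have ha := exp_pos p.1
  simp only [FLRWPhi, sin_add_cos_FLRWPhiInv hr, (cos_sin_snd_FLRWPhiInv hr).2]
  ext
  · rw [mul_div_cancel_right₀ _ hc.ne', log_exp]
  · field_simp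

theorem stmt_0 :
    (∀ q ∈ FLRWDomain, 0 < Real.sin q.1 + Real.cos q.2) ∧
    Set.BijOn FLRWPhi FLRWDomain (Set.univ ×ˢ Set.Ioi (0 : ℝ)) :=
  ⟨fun _ hq => sin_add_cos_pos_of_mem_FLRWDomain hq,
    InvOn.bijOn ⟨leftInvOn_FLRWPhiInv, rightInvOn_FLRWPhiInv⟩ mapsTo_FLRWPhi mapsTo_FLRWPhiInv⟩
end

section
/- The map Φ(T,R) = ( log((sin T + cos R)/cos T), sin R/(sin T + cos R) ) is a smooth (C^∞) diffeomorphism from D onto ℝ × (0,∞); that is, Φ is smooth, bijective onto ℝ × (0,∞), and its inverse is smooth (equivalently, its differential is invertible at every point of D). -/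
open Real Set

/-- The auxiliary quantity `a = tan T` as a function of `(t̂, r)`. -/
noncomputable def FLRWa : ℝ × ℝ → ℝ :=
  fun p => ((1 + p.2 ^ 2) * Real.exp p.1 ^ 2 - 1) / (2 * Real.exp p.1)

/-- The inverse coordinate change. -/
noncomputable def FLRWPsi : ℝ × ℝ → ℝ × ℝ :=
  fun p => (Real.arctan (FLRWa p),
    Real.arccos ((Real.exp p.1 - FLRWa p) / Real.sqrt (1 + FLRWa p ^ 2)))

lemma flrw_S_pos {q : ℝ × ℝ} (hq : q ∈ FLRWDomain) :
    0 < Real.sin q.1 + Real.cos q.2 := by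
  obtain ⟨h1, h2, h3, h4, h5⟩ := hq
  have key : Real.sin (q.2 - π/2) < Real.sin q.1 := by
    apply Real.strictMonoOn_sin _ _ h5
    · constructor <;> [linarith; linarith]
    · constructor <;> [linarith; linarith]
  rw [Real.sin_sub_pi_div_two] at key
  linarith

lemma flrw_cos_pos {q : ℝ × ℝ} (hq : q ∈ FLRWDomain) : 0 < Real.cos q.1 :=
  Real.cos_pos_of_mem_Ioo ⟨hq.1, hq.2.1⟩

/-- Key algebraic facts about `Ψ` at a point of the target. -/
lemma flrw_right {p : ℝ × ℝ} (hp : p ∈ Set.univ ×ˢ Set.Ioi (0 : ℝ)) :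
    FLRWPsi p ∈ FLRWDomain ∧ FLRWPhi (FLRWPsi p) = p := by
  obtain ⟨-, hr⟩ := hp
  simp only [Set.mem_Ioi] at hr
  set t := p.1
  set r := p.2
  have hu : (0 : ℝ) < Real.exp t := Real.exp_pos t
  set u := Real.exp t with hu_def
  set a := FLRWa p with ha_def
  have ha : a = ((1 + r ^ 2) * u ^ 2 - 1) / (2 * u) := rfl
  have hsq_pos : (0 : ℝ) < 1 + a ^ 2 := by positivity
  have hsqrt_pos : (0 : ℝ) < Real.sqrt (1 + a ^ 2) := Real.sqrt_pos.2 hsq_pos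
  have hsqrt_sq : Real.sqrt (1 + a ^ 2) ^ 2 = 1 + a ^ 2 := Real.sq_sqrt hsq_pos.le
  -- the key identity : 1 + a² - (u - a)² = r²u²
  have hkey : 1 + a ^ 2 - (u - a) ^ 2 = r ^ 2 * u ^ 2 := by
    have h2u : (2 : ℝ) * u ≠ 0 := by positivity
    rw [ha]
    field_simp
    ring
  set c := (u - a) / Real.sqrt (1 + a ^ 2) with hc_def
  have hc_sq : c ^ 2 = (u - a) ^ 2 / (1 + a ^ 2) := by
    rw [hc_def, div_pow, hsqrt_sq]
  have hru : (0 : ℝ) < r ^ 2 * u ^ 2 := by positivity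
  have hc_lt : c ^ 2 < 1 := by
    rw [hc_sq, div_lt_one hsq_pos]
    nlinarith
  have hc_mem : -1 < c ∧ c < 1 := by
    constructor <;> nlinarith
  have hT1 : Real.arctan a < π / 2 := Real.arctan_lt_pi_div_two a
  have hT2 : -(π / 2) < Real.arctan a := Real.neg_pi_div_two_lt_arctan a
  have hR1 : 0 < Real.arccos c := Real.arccos_pos.2 hc_mem.2
  have hR2 : Real.arccos c < π := by
    refine lt_of_le_of_ne (Real.arccos_le_pi c) (fun h => ?_)
    rw [Real.arccos_eq_pi] at h
    linarith [hc_mem.1]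
  have hsinT : Real.sin (Real.arctan a) = a / Real.sqrt (1 + a ^ 2) :=
    Real.sin_arctan a
  have hcosT : Real.cos (Real.arctan a) = 1 / Real.sqrt (1 + a ^ 2) :=
    Real.cos_arctan a
  have hcosR : Real.cos (Real.arccos c) = c :=
    Real.cos_arccos hc_mem.1.le hc_mem.2.le
  have hsinR : Real.sin (Real.arccos c) = r * u / Real.sqrt (1 + a ^ 2) := by
    rw [Real.sin_arccos]
    have h1 : 1 - c ^ 2 = r ^ 2 * u ^ 2 / (1 + a ^ 2) := by
      rw [hc_sq]
      field_simp
      nlinarith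
    have h2 : r ^ 2 * u ^ 2 / (1 + a ^ 2) = (r * u / Real.sqrt (1 + a ^ 2)) ^ 2 := by
      rw [div_pow, hsqrt_sq]; ring_nf
    rw [h1, h2, Real.sqrt_sq (by positivity)]
  -- sin T + cos R = u / √(1+a²)
  have hS : Real.sin (Real.arctan a) + Real.cos (Real.arccos c) =
      u / Real.sqrt (1 + a ^ 2) := by
    rw [hsinT, hcosR, hc_def]
    field_simp
    ring
  have hS_pos : 0 < Real.sin (Real.arctan a) + Real.cos (Real.arccos c) := by
    rw [hS]; positivity
  constructor
  · -- membership in the domain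
    refine ⟨hT2, hT1, hR1, hR2, ?_⟩
    show (FLRWPsi p).1 > (FLRWPsi p).2 - π / 2
    have hfst : (FLRWPsi p).1 = Real.arctan a := rfl
    have hsnd2 : (FLRWPsi p).2 = Real.arccos c := rfl
    rw [hfst, hsnd2]
    by_contra hcon
    push_neg at hcon
    have key : Real.sin (Real.arctan a) ≤ Real.sin (Real.arccos c - π/2) := by
      rcases eq_or_lt_of_le hcon with h | h
      · rw [h]
      · exact le_of_lt (Real.strictMonoOn_sin
          ⟨hT2.le, hT1.le⟩ ⟨by linarith, by linarith⟩ h)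
    rw [Real.sin_sub_pi_div_two] at key
    linarith
  · -- Φ (Ψ p) = p
    have h1 : FLRWPhi (FLRWPsi p) =
        (Real.log ((Real.sin (Real.arctan a) + Real.cos (Real.arccos c)) /
          Real.cos (Real.arctan a)),
        Real.sin (Real.arccos c) /
          (Real.sin (Real.arctan a) + Real.cos (Real.arccos c))) := rfl
    rw [h1, hS, hsinR, hcosT]
    have hfrac1 : u / Real.sqrt (1 + a ^ 2) / (1 / Real.sqrt (1 + a ^ 2)) = u := by
      field_simp
    have hfrac2 : r * u / Real.sqrt (1 + a ^ 2) / (u / Real.sqrt (1 + a ^ 2)) = r := by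
      field_simp
    rw [hfrac1, hfrac2]
    have hlog : Real.log u = p.1 := by rw [hu_def, Real.log_exp]
    rw [hlog]

/-- `Ψ ∘ Φ = id` on the domain. -/
lemma flrw_left {q : ℝ × ℝ} (hq : q ∈ FLRWDomain) : FLRWPsi (FLRWPhi q) = q := by
  obtain ⟨h1, h2, h3, h4, h5⟩ := hq
  have hS : 0 < Real.sin q.1 + Real.cos q.2 := flrw_S_pos ⟨h1, h2, h3, h4, h5⟩
  have hcos : 0 < Real.cos q.1 := flrw_cos_pos ⟨h1, h2, h3, h4, h5⟩
  set T := q.1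
  set R := q.2
  set S := Real.sin T + Real.cos R with hS_def
  have hu : Real.exp (Real.log (S / Real.cos T)) = S / Real.cos T :=
    Real.exp_log (by positivity)
  have hpyth : Real.sin T ^ 2 + Real.cos T ^ 2 = 1 := Real.sin_sq_add_cos_sq T
  have hpythR : Real.sin R ^ 2 + Real.cos R ^ 2 = 1 := Real.sin_sq_add_cos_sq R
  -- compute the value of a
  have ha : FLRWa (FLRWPhi q) = Real.sin T / Real.cos T := by
    show ((1 + (Real.sin R / S) ^ 2) * Real.exp (Real.log (S / Real.cos T)) ^ 2 - 1) /
        (2 * Real.exp (Real.log (S / Real.cos T))) = Real.sin T / Real.cos T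
    have hS2 : S ^ 2 + Real.sin R ^ 2 - Real.cos T ^ 2 = Real.sin T * (2 * S) := by
      rw [hS_def]; linear_combination hpythR - hpyth
    rw [hu]
    field_simp
    linear_combination Real.cos T ^ 2 * hS2 + (Real.cos T ^ 2 - 1) * (hpyth - hpythR)
  have hsq : 1 + FLRWa (FLRWPhi q) ^ 2 = (1 / Real.cos T) ^ 2 := by
    rw [ha]
    field_simp
    linear_combination hpyth
  have hsqrt : Real.sqrt (1 + FLRWa (FLRWPhi q) ^ 2) = 1 / Real.cos T := by
    rw [hsq, Real.sqrt_sq (by positivity)]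
  have hc : (Real.exp (Real.log (S / Real.cos T)) - FLRWa (FLRWPhi q)) /
      Real.sqrt (1 + FLRWa (FLRWPhi q) ^ 2) = Real.cos R := by
    rw [hu, hsqrt, ha]
    have h6 : (S / Real.cos T - Real.sin T / Real.cos T) / (1 / Real.cos T)
        = S - Real.sin T := by field_simp
    rw [h6, hS_def]; ring
  have hfst : (FLRWPsi (FLRWPhi q)).1 = T := by
    show Real.arctan (FLRWa (FLRWPhi q)) = T
    rw [ha, ← Real.tan_eq_sin_div_cos, Real.arctan_tan h1 h2]
  have hsnd : (FLRWPsi (FLRWPhi q)).2 = R := by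
    show Real.arccos ((Real.exp ((FLRWPhi q).1) - FLRWa (FLRWPhi q)) /
      Real.sqrt (1 + FLRWa (FLRWPhi q) ^ 2)) = R
    have h7 : (FLRWPhi q).1 = Real.log (S / Real.cos T) := rfl
    rw [h7, hc, Real.arccos_cos h3.le h4.le]
  exact Prod.ext hfst hsnd

/-- `Φ` is smooth on the domain. -/
lemma flrw_phi_smooth : ContDiffOn ℝ (⊤ : ℕ∞) FLRWPhi FLRWDomain := by
  intro q hq
  have hS : 0 < Real.sin q.1 + Real.cos q.2 := flrw_S_pos hq
  have hcos : 0 < Real.cos q.1 := flrw_cos_pos hq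
  apply ContDiffAt.contDiffWithinAt
  have hsin1 : ContDiffAt ℝ (⊤ : ℕ∞) (fun x : ℝ × ℝ => Real.sin x.1 + Real.cos x.2) q :=
    ((Real.contDiff_sin.comp contDiff_fst).add
      (Real.contDiff_cos.comp contDiff_snd)).contDiffAt
  have hcos1 : ContDiffAt ℝ (⊤ : ℕ∞) (fun x : ℝ × ℝ => Real.cos x.1) q :=
    (Real.contDiff_cos.comp contDiff_fst).contDiffAt
  have hsin2 : ContDiffAt ℝ (⊤ : ℕ∞) (fun x : ℝ × ℝ => Real.sin x.2) q :=
    (Real.contDiff_sin.comp contDiff_snd).contDiffAt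
  apply ContDiffAt.prodMk
  · exact (Real.contDiffAt_log.2 (by positivity)).comp q (hsin1.div hcos1 hcos.ne')
  · exact hsin2.div hsin1 hS.ne'

/-- `Ψ` is smooth on the target. -/
lemma flrw_psi_smooth : ContDiffOn ℝ (⊤ : ℕ∞) FLRWPsi (Set.univ ×ˢ Set.Ioi (0 : ℝ)) := by
  intro p hp
  obtain ⟨-, hr⟩ := hp
  simp only [Set.mem_Ioi] at hr
  have hu : (0 : ℝ) < Real.exp p.1 := Real.exp_pos p.1
  apply ContDiffAt.contDiffWithinAt
  have hexp : ContDiffAt ℝ (⊤ : ℕ∞) (fun x : ℝ × ℝ => Real.exp x.1) p :=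
    (Real.contDiff_exp.comp contDiff_fst).contDiffAt
  have hnum : ContDiffAt ℝ (⊤ : ℕ∞) (fun x : ℝ × ℝ => (1 + x.2 ^ 2) * Real.exp x.1 ^ 2 - 1) p := by
    exact (((contDiffAt_const.add ((contDiffAt_snd).pow 2)).mul
      (hexp.pow 2)).sub contDiffAt_const)
  have hden : ContDiffAt ℝ (⊤ : ℕ∞) (fun x : ℝ × ℝ => 2 * Real.exp x.1) p :=
    contDiffAt_const.mul hexp
  have ha_smooth : ContDiffAt ℝ (⊤ : ℕ∞) FLRWa p := hnum.div hden (by positivity)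
  have hsq_pos : (0 : ℝ) < 1 + FLRWa p ^ 2 := by positivity
  have hsqrt_smooth : ContDiffAt ℝ (⊤ : ℕ∞) (fun x => Real.sqrt (1 + FLRWa x ^ 2)) p :=
    (contDiffAt_const.add (ha_smooth.pow 2)).sqrt hsq_pos.ne'
  have hsqrt_pos : (0 : ℝ) < Real.sqrt (1 + FLRWa p ^ 2) := Real.sqrt_pos.2 hsq_pos
  have hc_smooth : ContDiffAt ℝ (⊤ : ℕ∞)
      (fun x : ℝ × ℝ => (Real.exp x.1 - FLRWa x) / Real.sqrt (1 + FLRWa x ^ 2)) p :=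
    (hexp.sub ha_smooth).div hsqrt_smooth hsqrt_pos.ne'
  -- the argument of arccos lies in (-1, 1)
  have hsqrt_sq : Real.sqrt (1 + FLRWa p ^ 2) ^ 2 = 1 + FLRWa p ^ 2 :=
    Real.sq_sqrt hsq_pos.le
  have hkey : 1 + FLRWa p ^ 2 - (Real.exp p.1 - FLRWa p) ^ 2
      = p.2 ^ 2 * Real.exp p.1 ^ 2 := by
    show 1 + (((1 + p.2 ^ 2) * Real.exp p.1 ^ 2 - 1) / (2 * Real.exp p.1)) ^ 2 -
      (Real.exp p.1 - ((1 + p.2 ^ 2) * Real.exp p.1 ^ 2 - 1) / (2 * Real.exp p.1)) ^ 2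
      = p.2 ^ 2 * Real.exp p.1 ^ 2
    field_simp
    ring
  have hru : (0 : ℝ) < p.2 ^ 2 * Real.exp p.1 ^ 2 := by positivity
  set c := (Real.exp p.1 - FLRWa p) / Real.sqrt (1 + FLRWa p ^ 2) with hc_def
  have hc_sq : c ^ 2 = (Real.exp p.1 - FLRWa p) ^ 2 / (1 + FLRWa p ^ 2) := by
    rw [hc_def, div_pow, hsqrt_sq]
  have hc_lt : c ^ 2 < 1 := by
    rw [hc_sq, div_lt_one hsq_pos]; nlinarith
  have hc_mem : -1 < c ∧ c < 1 := ⟨by nlinarith, by nlinarith⟩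
  apply ContDiffAt.prodMk
  · exact Real.contDiff_arctan.contDiffAt.comp p ha_smooth
  · have := (Real.contDiffAt_arccos hc_mem.1.ne' hc_mem.2.ne).comp p hc_smooth; exact this


/-- `Φ` is a smooth diffeomorphism from `D` onto `ℝ × (0,∞)`: it is smooth on `D`,
a bijection from `D` onto `ℝ × (0,∞)`, and possesses a smooth inverse. -/
theorem stmt_1 :
    ContDiffOn ℝ (⊤ : ℕ∞) FLRWPhi FLRWDomain ∧
    Set.BijOn FLRWPhi FLRWDomain (Set.univ ×ˢ Set.Ioi (0 : ℝ)) ∧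
    ∃ Ψ : ℝ × ℝ → ℝ × ℝ,
      ContDiffOn ℝ (⊤ : ℕ∞) Ψ (Set.univ ×ˢ Set.Ioi (0 : ℝ)) ∧
      (∀ q ∈ FLRWDomain, Ψ (FLRWPhi q) = q) ∧
      (∀ p ∈ Set.univ ×ˢ Set.Ioi (0 : ℝ), Ψ p ∈ FLRWDomain ∧ FLRWPhi (Ψ p) = p) := by
  refine ⟨flrw_phi_smooth, ⟨?_, ?_, ?_⟩,
    FLRWPsi, flrw_psi_smooth, fun q hq => flrw_left hq, fun p hp => flrw_right hp⟩
  · -- MapsTo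
    intro q hq
    refine ⟨Set.mem_univ _, ?_⟩
    have hS : 0 < Real.sin q.1 + Real.cos q.2 := flrw_S_pos hq
    have hsinR : 0 < Real.sin q.2 := Real.sin_pos_of_pos_of_lt_pi hq.2.2.1 hq.2.2.2.1
    exact div_pos hsinR hS
  · -- InjOn
    intro a ha b hb hab
    rw [← flrw_left ha, ← flrw_left hb, hab]
  · -- SurjOn
    intro p hp
    obtain ⟨hmem, heq⟩ := flrw_right hp
    exact ⟨FLRWPsi p, hmem, heq⟩
end

section
/- Define on D the functions t̂(T,R) = log((sin T + cos R)/cos T) and r(T,R) = sin R/(sin T + cos R). Then at every point of D the following identities hold: (1) (∂t̂/∂T)² − e^{2t̂} (∂r/∂T)² = 1/cos² T; (2) (∂t̂/∂T)(∂t̂/∂R) − e^{2t̂} (∂r/∂T)(∂r/∂R) = 0; (3) −(∂t̂/∂R)² + e^{2t̂} (∂r/∂R)² = 1/cos² T; (4) e^{2t̂} r² = sin² R / cos² T. (These express that the pullback of the metric −dt̂² + e^{2t̂}(dr² + r² dΩ²) under the coordinate change equals (1/cos²T)(−dT² + dR² + sin²R dΩ²).) -/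
open Real Set

/-- `t̂(T,R) = log((sin T + cos R)/cos T)`. -/
noncomputable def tHat (T R : ℝ) : ℝ := Real.log ((Real.sin T + Real.cos R) / Real.cos T)

/-- `r(T,R) = sin R/(sin T + cos R)`. -/
noncomputable def rComov (T R : ℝ) : ℝ := Real.sin R / (Real.sin T + Real.cos R)

/-!
All four partial derivatives are rational in `sin` and `cos`, with the common numerator
`1 + sin T cos R` in `∂_T t̂` and `∂_R r`, and `e^{2t̂} = (sin T + cos R)² / cos² T`. After clearing
denominators, each identity reduces to `(1 + sin T cos R)² = (sin T + cos R)² + (sin R cos T)²`,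
which is Pythagoras applied to `T` and to `R`.
-/

section

variable {T R : ℝ}

theorem hasDerivAt_tHat_fst (hc : cos T ≠ 0) (hS : sin T + cos R ≠ 0) :
    HasDerivAt (fun s => tHat s R) ((1 + sin T * cos R) / (cos T * (sin T + cos R))) T := by
  refine ((((hasDerivAt_sin T).add_const (cos R)).div (hasDerivAt_cos T) hc).log
    (div_ne_zero hS hc)).congr_deriv ?_
  simp only [Pi.div_apply]
  field_simp
  linear_combination sin_sq_add_cos_sq T

theorem hasDerivAt_tHat_snd (hc : cos T ≠ 0) (hS : sin T + cos R ≠ 0) :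
    HasDerivAt (fun s => tHat T s) (-sin R / (sin T + cos R)) R := by
  refine ((((hasDerivAt_cos R).const_add (sin T)).div_const (cos T)).log
    (div_ne_zero hS hc)).congr_deriv ?_
  field_simp

theorem hasDerivAt_rComov_fst (hS : sin T + cos R ≠ 0) :
    HasDerivAt (fun s => rComov s R) (-(sin R * cos T) / (sin T + cos R) ^ 2) T := by
  refine ((hasDerivAt_const T (sin R)).div ((hasDerivAt_sin T).add_const (cos R)) hS).congr_deriv ?_
  ring

theorem hasDerivAt_rComov_snd (hS : sin T + cos R ≠ 0) :
    HasDerivAt (fun s => rComov T s) ((1 + sin T * cos R) / (sin T + cos R) ^ 2) R := by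
  refine ((hasDerivAt_sin R).div ((hasDerivAt_cos R).const_add (sin T)) hS).congr_deriv ?_
  congr 1
  linear_combination sin_sq_add_cos_sq R

theorem exp_two_mul_tHat (hc : cos T ≠ 0) (hS : sin T + cos R ≠ 0) :
    exp (2 * tHat T R) = ((sin T + cos R) / cos T) ^ 2 := by
  rw [tHat, two_mul, exp_add, ← sq, exp_log_eq_abs (div_ne_zero hS hc), sq_abs]

theorem one_add_sin_mul_cos_sq (T R : ℝ) :
    (1 + sin T * cos R) ^ 2 = (sin T + cos R) ^ 2 + (sin R * cos T) ^ 2 := by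
  linear_combination (cos R ^ 2 - 1) * sin_sq_add_cos_sq T - cos T ^ 2 * sin_sq_add_cos_sq R

theorem sin_add_cos_pos (hT : T < π / 2) (hR : 0 < R) (hTR : R - π / 2 < T) :
    0 < sin T + cos R := by
  have h := sin_lt_sin_of_lt_of_le_pi_div_two (by linarith) hT.le hTR
  rw [sin_sub_pi_div_two] at h
  linarith

end

theorem stmt_2_general (T R : ℝ) (h1 : -(π/2) < T) (h2 : T < π/2) (h3 : 0 < R)
    (h5 : T > R - π/2) :
    (deriv (fun s => tHat s R) T) ^ 2
        - Real.exp (2 * tHat T R) * (deriv (fun s => rComov s R) T) ^ 2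
      = 1 / Real.cos T ^ 2 ∧
    (deriv (fun s => tHat s R) T) * (deriv (fun s => tHat T s) R)
        - Real.exp (2 * tHat T R) * (deriv (fun s => rComov s R) T)
            * (deriv (fun s => rComov T s) R)
      = 0 ∧
    -(deriv (fun s => tHat T s) R) ^ 2
        + Real.exp (2 * tHat T R) * (deriv (fun s => rComov T s) R) ^ 2
      = 1 / Real.cos T ^ 2 ∧
    Real.exp (2 * tHat T R) * rComov T R ^ 2 = Real.sin R ^ 2 / Real.cos T ^ 2 := by
  have hc : cos T ≠ 0 := (cos_pos_of_mem_Ioo ⟨h1, h2⟩).ne'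
  have hS : sin T + cos R ≠ 0 := (sin_add_cos_pos h2 h3 h5).ne'
  have hQ := one_add_sin_mul_cos_sq T R
  rw [(hasDerivAt_tHat_fst hc hS).deriv, (hasDerivAt_tHat_snd hc hS).deriv,
    (hasDerivAt_rComov_fst hS).deriv, (hasDerivAt_rComov_snd hS).deriv,
    exp_two_mul_tHat hc hS, rComov]
  refine ⟨?_, ?_, ?_, ?_⟩
  · field_simp
    linear_combination hQ
  · field_simp
    ring
  · field_simp
    linear_combination hQ
  · field_simp

/-- At every point of `D`, the coordinate change `(T,R) ↦ (t̂, r)` pulls back the metric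
`-dt̂² + e^{2t̂}(dr² + r² dΩ²)` to `(1/cos²T)(-dT² + dR² + sin²R dΩ²)`, expressed through
the four identities on the partial derivatives below. -/
theorem stmt_2 (T R : ℝ) (h1 : -(π/2) < T) (h2 : T < π/2) (h3 : 0 < R) (h4 : R < π)
    (h5 : T > R - π/2) :
    (deriv (fun s => tHat s R) T) ^ 2
        - Real.exp (2 * tHat T R) * (deriv (fun s => rComov s R) T) ^ 2
      = 1 / Real.cos T ^ 2 ∧
    (deriv (fun s => tHat s R) T) * (deriv (fun s => tHat T s) R)
        - Real.exp (2 * tHat T R) * (deriv (fun s => rComov s R) T)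
            * (deriv (fun s => rComov T s) R)
      = 0 ∧
    -(deriv (fun s => tHat T s) R) ^ 2
        + Real.exp (2 * tHat T R) * (deriv (fun s => rComov T s) R) ^ 2
      = 1 / Real.cos T ^ 2 ∧
    Real.exp (2 * tHat T R) * rComov T R ^ 2 = Real.sin R ^ 2 / Real.cos T ^ 2 :=
  stmt_2_general T R h1 h2 h3 h5
end

section
/- Let n ≥ 2, let ρ > 0, and let σ : [0,1] → ℝⁿ be a C¹ curve with ‖σ(τ)‖ ≥ ρ for all τ ∈ [0,1]. Then the Euclidean length of σ, ∫_0^1 ‖σ′(τ)‖ dτ, is at least ρ · θ, where θ ∈ [0, π] is the angle between the vectors σ(0) and σ(1), i.e. θ = arccos( ⟨σ(0), σ(1)⟩ / (‖σ(0)‖ · ‖σ(1)‖) ). Equivalently, any curve staying outside the open ball of radius ρ has length at least ρ times the intrinsic spherical distance between the radial projections of its endpoints. -/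
/-!
Normalize the curve: `v = σ / ‖σ‖` runs on the unit sphere with speed at most `‖σ'‖ / ‖σ‖ ≤ ‖σ'‖ / ρ`,
since differentiating `x ↦ x / ‖x‖` kills the radial part of `σ'` and divides by `‖σ‖`.
It remains to see that a curve on the unit sphere is at least as long as the angle between its
endpoints. Along such a curve `⟨v a, v t⟩` has derivative `⟨v a, v'⟩`, and as `v' ⊥ v` Cauchy–Schwarz
gives `|⟨v a, v'⟩| ≤ √(1 - ⟨v a, v⟩²) ‖v'‖`, i.e. `t ↦ arccos ⟨v a, v t⟩` grows no faster than the
length. Because `arccos` is not differentiable at `±1`, the comparison is run for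
`arccos (c ⟨v a, v t⟩)` with `c < 1`, and then `c → 1`.
-/

open Real Set Filter Topology InnerProductGeometry
open scoped RealInnerProductSpace

lemma ContinuousOn.hasDerivAt_integral_right {F : Type*} [NormedAddCommGroup F]
    [NormedSpace ℝ F] [CompleteSpace F] {f : ℝ → F} {a b t : ℝ}
    (hf : ContinuousOn f (Icc a b)) (ht : t ∈ Ioo a b) :
    HasDerivAt (fun x => ∫ s in a..x, f s) (f t) t :=
  intervalIntegral.integral_hasDerivAt_right
    ((hf.mono (Icc_subset_Icc_right ht.2.le)).intervalIntegrable_of_Icc ht.1.le)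
    ((hf.mono Ioo_subset_Icc_self).stronglyMeasurableAtFilter isOpen_Ioo t ht)
    (hf.continuousAt (Icc_mem_nhds ht.1 ht.2))

lemma mul_sqrt_one_sub_sq_le {c p : ℝ} (hc0 : 0 ≤ c) (hc1 : c ≤ 1) :
    c * √(1 - p ^ 2) ≤ √(1 - (c * p) ^ 2) := by
  calc c * √(1 - p ^ 2) = √(c ^ 2 * (1 - p ^ 2)) := by
        rw [Real.sqrt_mul (sq_nonneg c), Real.sqrt_sq hc0]
    _ ≤ √(1 - (c * p) ^ 2) := Real.sqrt_le_sqrt (by nlinarith [sq_nonneg p])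

lemma neg_div_sqrt_one_sub_sq_mul_le {c p q w : ℝ} (hc0 : 0 ≤ c) (hc1 : c ≤ 1)
    (hcp : |c * p| < 1) (hw : 0 ≤ w) (hq : |q| ≤ √(1 - p ^ 2) * w) :
    -(1 / √(1 - (c * p) ^ 2)) * (c * q) ≤ w := by
  have hs : 0 < √(1 - (c * p) ^ 2) :=
    Real.sqrt_pos.mpr (by nlinarith [sq_abs (c * p), abs_nonneg (c * p)])
  rw [neg_mul, one_div_mul_eq_div, ← neg_div, div_le_iff₀ hs]
  calc -(c * q) ≤ c * (√(1 - p ^ 2) * w) := by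
        nlinarith [neg_abs_le q, mul_le_mul_of_nonneg_left hq hc0]
    _ ≤ w * √(1 - (c * p) ^ 2) := by
        nlinarith [mul_sqrt_one_sub_sq_le (p := p) hc0 hc1]

section InnerProductSpace

variable {E : Type*} [NormedAddCommGroup E] [InnerProductSpace ℝ E]

lemma norm_sub_inner_smul_sq {u : E} (hu : ‖u‖ = 1) (x : E) :
    ‖x - ⟪u, x⟫ • u‖ ^ 2 = ‖x‖ ^ 2 - ⟪u, x⟫ ^ 2 := by
  rw [norm_sub_sq_real, real_inner_smul_right, norm_smul, hu, mul_one, Real.norm_eq_abs, sq_abs,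
    real_inner_comm]
  ring

lemma norm_sub_inner_smul_le {u : E} (hu : ‖u‖ = 1) (x : E) : ‖x - ⟪u, x⟫ • u‖ ≤ ‖x‖ := by
  rw [← sq_le_sq₀ (norm_nonneg _) (norm_nonneg _), norm_sub_inner_smul_sq hu]
  linarith [sq_nonneg ⟪u, x⟫]

lemma abs_inner_le_sqrt_mul_norm {u d : E} (hu : ‖u‖ = 1) (hud : ⟪u, d⟫ = 0) (x : E) :
    |⟪x, d⟫| ≤ √(‖x‖ ^ 2 - ⟪u, x⟫ ^ 2) * ‖d‖ := by
  have hproj : ⟪x, d⟫ = ⟪x - ⟪u, x⟫ • u, d⟫ := by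
    rw [inner_sub_left, real_inner_smul_left, hud, mul_zero, sub_zero]
  rw [hproj, ← norm_sub_inner_smul_sq hu, Real.sqrt_sq (norm_nonneg _)]
  exact abs_real_inner_le_norm _ _

lemma HasDerivAt.inner_self_eq_zero {v : ℝ → E} {v' : E} {t : ℝ} (hv : HasDerivAt v v' t)
    (hconst : ∀ᶠ s in 𝓝 t, ‖v s‖ = ‖v t‖) : ⟪v t, v'⟫ = 0 := by
  have hzero : HasDerivAt (‖v ·‖ ^ 2) 0 t :=
    (hasDerivAt_const t (‖v t‖ ^ 2)).congr_of_eventuallyEq (hconst.mono fun s hs => by simp [hs])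
  linarith [hv.norm_sq.unique hzero]

lemma HasDerivAt.norm {f : ℝ → E} {f' : E} {t : ℝ} (hf : HasDerivAt f f' t) (h0 : f t ≠ 0) :
    HasDerivAt (‖f ·‖) (⟪f t, f'⟫ / ‖f t‖) t := by
  have h := hf.norm_sq.sqrt (by positivity)
  simp only [Real.sqrt_sq (norm_nonneg _)] at h
  convert h using 1
  field_simp

lemma HasDerivAt.inv_norm_smul {f : ℝ → E} {f' : E} {t : ℝ} (hf : HasDerivAt f f' t)
    (h0 : f t ≠ 0) :
    HasDerivAt (fun s => ‖f s‖⁻¹ • f s)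
      (‖f t‖⁻¹ • (f' - ⟪‖f t‖⁻¹ • f t, f'⟫ • ‖f t‖⁻¹ • f t)) t := by
  refine (((hf.norm h0).inv (norm_ne_zero_iff.mpr h0)).smul hf).congr_deriv ?_
  rw [real_inner_smul_left, smul_sub, smul_smul, smul_smul]
  module

lemma norm_inv_norm_smul_sub_inner_smul_le {x : E} (hx : x ≠ 0) (d : E) :
    ‖‖x‖⁻¹ • (d - ⟪‖x‖⁻¹ • x, d⟫ • ‖x‖⁻¹ • x)‖ ≤ ‖x‖⁻¹ * ‖d‖ := by
  rw [norm_smul, norm_inv, norm_norm]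
  gcongr
  exact norm_sub_inner_smul_le (norm_smul_inv_norm hx) d

variable {v v' : ℝ → E} {ℓ ℓ' : ℝ → ℝ} {a b : ℝ}

lemma arccos_mul_inner_sub_arccos_le {c : ℝ} (hab : a ≤ b) (hc : c ∈ Ioo 0 1)
    (hv : ∀ t ∈ Icc a b, ‖v t‖ = 1) (hvc : ContinuousOn v (Icc a b))
    (hvd : ∀ t ∈ Ioo a b, HasDerivAt v (v' t) t) (hℓc : ContinuousOn ℓ (Icc a b))
    (hℓd : ∀ t ∈ Ioo a b, HasDerivAt ℓ (ℓ' t) t) (hle : ∀ t ∈ Ioo a b, ‖v' t‖ ≤ ℓ' t) :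
    arccos (c * ⟪v a, v b⟫) - arccos c ≤ ℓ b - ℓ a := by
  have ha : a ∈ Icc a b := left_mem_Icc.mpr hab
  have hb : b ∈ Icc a b := right_mem_Icc.mpr hab
  have hcp : ∀ t ∈ Ioo a b, |c * ⟪v a, v t⟫| < 1 := by
    intro t ht
    have hp : |⟪v a, v t⟫| ≤ 1 := by
      simpa [hv a ha, hv t (Ioo_subset_Icc_self ht)] using abs_real_inner_le_norm (v a) (v t)
    rw [abs_mul, abs_of_pos hc.1]
    linarith [mul_le_mul_of_nonneg_left hp hc.1.le, hc.2]
  have hderiv : ∀ t ∈ Ioo a b, HasDerivAt (fun t => arccos (c * ⟪v a, v t⟫) - ℓ t)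
      (-(1 / √(1 - (c * ⟪v a, v t⟫) ^ 2)) * (c * ⟪v a, v' t⟫) - ℓ' t) t := by
    intro t ht
    have hinner : HasDerivAt (fun t => ⟪v a, v t⟫) ⟪v a, v' t⟫ t := by
      simpa using (hasDerivAt_const t (v a)).inner ℝ (hvd t ht)
    obtain ⟨hgt, hlt⟩ := abs_lt.mp (hcp t ht)
    exact ((hasDerivAt_arccos hgt.ne' hlt.ne).comp t (hinner.const_mul c)).sub (hℓd t ht)
  have hanti : AntitoneOn (fun t => arccos (c * ⟪v a, v t⟫) - ℓ t) (Icc a b) := by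
    refine antitoneOn_of_hasDerivWithinAt_nonpos (convex_Icc a b)
      (f' := fun t => -(1 / √(1 - (c * ⟪v a, v t⟫) ^ 2)) * (c * ⟪v a, v' t⟫) - ℓ' t)
      ((continuous_arccos.comp_continuousOn
        (continuousOn_const.mul (continuousOn_const.inner hvc))).sub hℓc)
      (fun t ht => ?_) (fun t ht => ?_)
    · rw [interior_Icc] at ht ⊢
      exact (hderiv t ht).hasDerivWithinAt
    · rw [interior_Icc] at ht
      have htIcc := Ioo_subset_Icc_self ht
      have horth : ⟪v t, v' t⟫ = 0 := (hvd t ht).inner_self_eq_zero <|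
        eventually_of_mem (Ioo_mem_nhds ht.1 ht.2) fun s hs =>
          (hv s (Ioo_subset_Icc_self hs)).trans (hv t htIcc).symm
      have hq := abs_inner_le_sqrt_mul_norm (hv t htIcc) horth (v a)
      rw [hv a ha, one_pow, real_inner_comm (v a) (v t)] at hq
      linarith [neg_div_sqrt_one_sub_sq_mul_le hc.1.le hc.2.le (hcp t ht) (norm_nonneg _) hq,
        hle t ht]
  have h := hanti ha hb hab
  simp only [real_inner_self_eq_norm_sq, hv a ha, one_pow, mul_one] at h
  linarith

theorem angle_le_sub_of_norm_deriv_le (hab : a ≤ b)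
    (hv : ∀ t ∈ Icc a b, ‖v t‖ = 1) (hvc : ContinuousOn v (Icc a b))
    (hvd : ∀ t ∈ Ioo a b, HasDerivAt v (v' t) t) (hℓc : ContinuousOn ℓ (Icc a b))
    (hℓd : ∀ t ∈ Ioo a b, HasDerivAt ℓ (ℓ' t) t) (hle : ∀ t ∈ Ioo a b, ‖v' t‖ ≤ ℓ' t) :
    angle (v a) (v b) ≤ ℓ b - ℓ a := by
  have hangle : angle (v a) (v b) = arccos ⟪v a, v b⟫ := by
    simp [angle, hv a (left_mem_Icc.mpr hab), hv b (right_mem_Icc.mpr hab)]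
  have hlim : Tendsto (fun c => arccos (c * ⟪v a, v b⟫) - arccos c) (𝓝[<] 1)
      (𝓝 (arccos ⟪v a, v b⟫)) := by
    have hcont : Continuous fun c => arccos (c * ⟪v a, v b⟫) - arccos c := by fun_prop
    simpa using (hcont.tendsto 1).mono_left nhdsWithin_le_nhds
  rw [hangle]
  refine le_of_tendsto hlim ?_
  filter_upwards [Ioo_mem_nhdsLT zero_lt_one] with c hc
  exact arccos_mul_inner_sub_arccos_le hab hc hv hvc hvd hℓc hℓd hle

end InnerProductSpace

theorem stmt_8_general (n : ℕ) (ρ : ℝ) (hρ : 0 < ρ)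
    (σ σ' : ℝ → EuclideanSpace ℝ (Fin n))
    (hderiv : ∀ τ ∈ Set.Icc (0 : ℝ) 1, HasDerivWithinAt σ (σ' τ) (Set.Icc 0 1) τ)
    (hcont : ContinuousOn σ' (Set.Icc 0 1))
    (hout : ∀ τ ∈ Set.Icc (0 : ℝ) 1, ρ ≤ ‖σ τ‖) :
    ρ * Real.arccos (⟪σ 0, σ 1⟫ / (‖σ 0‖ * ‖σ 1‖)) ≤ ∫ τ in (0 : ℝ)..1, ‖σ' τ‖ := by
  have hne : ∀ τ ∈ Icc (0 : ℝ) 1, σ τ ≠ 0 := fun τ hτ =>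
    norm_pos_iff.mp (hρ.trans_le (hout τ hτ))
  have hσc : ContinuousOn σ (Icc 0 1) := fun τ hτ => (hderiv τ hτ).continuousWithinAt
  have hσd : ∀ τ ∈ Ioo (0 : ℝ) 1, HasDerivAt σ (σ' τ) τ := fun τ hτ =>
    (hderiv τ (Ioo_subset_Icc_self hτ)).hasDerivAt (Icc_mem_nhds hτ.1 hτ.2)
  have hlen : ContinuousOn (fun τ => ∫ s in (0 : ℝ)..τ, ‖σ' s‖) (Icc 0 1) := by
    rw [← uIcc_of_le zero_le_one] at hcont ⊢
    exact intervalIntegral.continuousOn_primitive_interval hcont.norm.integrableOn_uIcc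
  have hangle := angle_le_sub_of_norm_deriv_le (v := fun τ => ‖σ τ‖⁻¹ • σ τ)
    (ℓ := fun τ => ρ⁻¹ * ∫ s in (0 : ℝ)..τ, ‖σ' s‖) zero_le_one
    (fun τ hτ => norm_smul_inv_norm (hne τ hτ))
    ((hσc.norm.inv₀ fun τ hτ => norm_ne_zero_iff.mpr (hne τ hτ)).smul hσc)
    (fun τ hτ => (hσd τ hτ).inv_norm_smul (hne τ (Ioo_subset_Icc_self hτ)))
    (continuousOn_const.mul hlen)
    (fun τ hτ => (hcont.norm.hasDerivAt_integral_right hτ).const_mul ρ⁻¹)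
    (fun τ hτ => (norm_inv_norm_smul_sub_inner_smul_le (hne τ (Ioo_subset_Icc_self hτ)) _).trans
      (by gcongr; exact hout τ (Ioo_subset_Icc_self hτ)))
  rw [angle_smul_left_of_pos _ _ (inv_pos.mpr (norm_pos_iff.mpr (hne 0 (by simp)))),
    angle_smul_right_of_pos _ _ (inv_pos.mpr (norm_pos_iff.mpr (hne 1 (by simp))))] at hangle
  simp only [intervalIntegral.integral_same, mul_zero, sub_zero] at hangle
  exact (le_inv_mul_iff₀ hρ).mp hangle

/-- Any `C¹` curve in `ℝⁿ` (`n ≥ 2`) staying outside the open ball of radius `ρ` has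
Euclidean length at least `ρ` times the angle between its endpoints, i.e. `ρ` times the
great-circle distance between the radial projections of its endpoints. -/
theorem stmt_8 (n : ℕ) (hn : 2 ≤ n) (ρ : ℝ) (hρ : 0 < ρ)
    (σ σ' : ℝ → EuclideanSpace ℝ (Fin n))
    (hderiv : ∀ τ ∈ Set.Icc (0 : ℝ) 1, HasDerivWithinAt σ (σ' τ) (Set.Icc 0 1) τ)
    (hcont : ContinuousOn σ' (Set.Icc 0 1))
    (hout : ∀ τ ∈ Set.Icc (0 : ℝ) 1, ρ ≤ ‖σ τ‖) :
    ρ * Real.arccos (⟪σ 0, σ 1⟫ / (‖σ 0‖ * ‖σ 1‖)) ≤ ∫ τ in (0 : ℝ)..1, ‖σ' τ‖ :=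
  stmt_8_general n ρ hρ σ σ' hderiv hcont hout
end

section
/- Let n ≥ 2. Let a, ρ : (−∞, t₀) → (0, ∞) be functions with a(t)·ρ(t) → ∞ as t → −∞. Let x₁, x₂ : (−∞, t₀) → ℝⁿ be maps with ‖xᵢ(t)‖ ≥ ρ(t) for all t, and suppose the unit vectors xᵢ(t)/‖xᵢ(t)‖ converge as t → −∞ to limits ω₁, ω₂ ∈ S^{n−1} with ω₁ ≠ ω₂. Then for every K > 0 there exists t_K < t₀ such that for all t < t_K, every C¹ curve σ : [0,1] → ℝⁿ with σ(0) = x₁(t), σ(1) = x₂(t) and ‖σ(τ)‖ ≥ ρ(t) for all τ satisfies a(t) · ∫_0^1 ‖σ′(τ)‖ dτ ≥ K. In particular, the distance between x₁(t) and x₂(t) in the region {‖x‖ ≥ ρ(t)} with respect to the rescaled metric a(t)²·(Euclidean) diverges to ∞ as t → −∞. -/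
open Set Filter

/-! A curve's length is at least its chord `‖x₁ - x₂‖`. For unit vectors `u, v` one has
`‖r₁ • u - r₂ • v‖² = (r₁ - r₂)² + r₁ r₂ ‖u - v‖²`, so for two points outside the ball of
radius `ρ` the chord is at least `ρ` times the distance between their directions. Those
directions converge to `ω₁ ≠ ω₂`, so the rescaled length eventually exceeds
`a(t) ρ(t) ‖ω₁ - ω₂‖ / 2`, which tends to infinity. -/

section RadialProjection

variable {E : Type*} [NormedAddCommGroup E] [InnerProductSpace ℝ E]

lemma norm_smul_sub_smul_sq_of_norm_eq_one {u v : E} (hu : ‖u‖ = 1) (hv : ‖v‖ = 1)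
    (r₁ r₂ : ℝ) : ‖r₁ • u - r₂ • v‖ ^ 2 = (r₁ - r₂) ^ 2 + r₁ * r₂ * ‖u - v‖ ^ 2 := by
  rw [norm_sub_sq_real, norm_sub_sq_real, norm_smul, norm_smul, real_inner_smul_left,
    real_inner_smul_right, hu, hv, Real.norm_eq_abs, Real.norm_eq_abs, mul_pow, mul_pow,
    sq_abs, sq_abs]
  ring

lemma mul_norm_sub_le_norm_smul_sub_smul {u v : E} (hu : ‖u‖ = 1) (hv : ‖v‖ = 1)
    {ρ r₁ r₂ : ℝ} (hρ : 0 ≤ ρ) (h₁ : ρ ≤ r₁) (h₂ : ρ ≤ r₂) :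
    ρ * ‖u - v‖ ≤ ‖r₁ • u - r₂ • v‖ := by
  have hρr : ρ * ρ ≤ r₁ * r₂ := mul_le_mul h₁ h₂ hρ (hρ.trans h₁)
  refine le_of_pow_le_pow_left₀ two_ne_zero (norm_nonneg _) ?_
  rw [norm_smul_sub_smul_sq_of_norm_eq_one hu hv, mul_pow]
  nlinarith [sq_nonneg (r₁ - r₂), sq_nonneg ‖u - v‖]

lemma mul_norm_inv_smul_sub_le {x y : E} {ρ : ℝ} (hρ : 0 ≤ ρ) (hx : ρ ≤ ‖x‖) (hy : ρ ≤ ‖y‖) :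
    ρ * ‖‖x‖⁻¹ • x - ‖y‖⁻¹ • y‖ ≤ ‖x - y‖ := by
  rcases hρ.eq_or_lt with rfl | hρ
  · simp
  have hx₀ : x ≠ 0 := norm_pos_iff.1 (hρ.trans_le hx)
  have hy₀ : y ≠ 0 := norm_pos_iff.1 (hρ.trans_le hy)
  simpa [smul_smul, hx₀, hy₀] using mul_norm_sub_le_norm_smul_sub_smul
    (norm_smul_inv_norm (𝕜 := ℝ) hx₀) (norm_smul_inv_norm (𝕜 := ℝ) hy₀) hρ.le hx hy

end RadialProjection

lemma norm_sub_le_integral_norm_of_hasDerivWithinAt {E : Type*} [NormedAddCommGroup E]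
    [NormedSpace ℝ E] [CompleteSpace E] {σ σ' : ℝ → E} {a b : ℝ} (hab : a ≤ b)
    (hσ : ∀ τ ∈ Icc a b, HasDerivWithinAt σ (σ' τ) (Icc a b) τ)
    (hσ' : ContinuousOn σ' (Icc a b)) :
    ‖σ b - σ a‖ ≤ ∫ τ in a..b, ‖σ' τ‖ := by
  have hint : IntervalIntegrable σ' MeasureTheory.volume a b :=
    (hσ'.mono (uIcc_of_le hab).subset).intervalIntegrable
  have hFTC : ∫ τ in a..b, σ' τ = σ b - σ a :=
    intervalIntegral.integral_eq_sub_of_hasDeriv_right_of_le hab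
      (fun τ hτ => (hσ τ hτ).continuousWithinAt)
      (fun τ hτ => (hσ τ (Ioo_subset_Icc_self hτ)).mono_of_mem_nhdsWithin
        (Icc_mem_nhdsGT_of_mem ⟨hτ.1.le, hτ.2⟩)) hint
  rw [← hFTC]
  exact intervalIntegral.norm_integral_le_integral_norm hab

theorem stmt_9_general (n : ℕ) (t₀ : ℝ) (a ρ : ℝ → ℝ)
    (hapos : ∀ t < t₀, 0 < a t) (hρpos : ∀ t < t₀, 0 < ρ t)
    (haρ : Tendsto (fun t => a t * ρ t) atBot atTop)
    (x₁ x₂ : ℝ → EuclideanSpace ℝ (Fin n))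
    (hx₁ : ∀ t < t₀, ρ t ≤ ‖x₁ t‖) (hx₂ : ∀ t < t₀, ρ t ≤ ‖x₂ t‖)
    (ω₁ ω₂ : EuclideanSpace ℝ (Fin n)) (hne : ω₁ ≠ ω₂)
    (hlim₁ : Tendsto (fun t => (‖x₁ t‖)⁻¹ • x₁ t) atBot (nhds ω₁))
    (hlim₂ : Tendsto (fun t => (‖x₂ t‖)⁻¹ • x₂ t) atBot (nhds ω₂)) :
    ∀ K > 0, ∃ tK < t₀, ∀ t < tK,
      ∀ σ σ' : ℝ → EuclideanSpace ℝ (Fin n),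
        (∀ τ ∈ Set.Icc (0 : ℝ) 1, HasDerivWithinAt σ (σ' τ) (Set.Icc 0 1) τ) →
        ContinuousOn σ' (Set.Icc 0 1) →
        σ 0 = x₁ t → σ 1 = x₂ t →
        (∀ τ ∈ Set.Icc (0 : ℝ) 1, ρ t ≤ ‖σ τ‖) →
        K ≤ a t * ∫ τ in (0 : ℝ)..1, ‖σ' τ‖ := by
  intro K _
  have hω : 0 < ‖ω₁ - ω₂‖ := norm_pos_iff.2 (sub_ne_zero.2 hne)
  set δ := ‖ω₁ - ω₂‖ / 2
  have hsep : ∀ᶠ t in atBot, δ ≤ ‖‖x₁ t‖⁻¹ • x₁ t - ‖x₂ t‖⁻¹ • x₂ t‖ :=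
    (hlim₁.sub hlim₂).norm.eventually (eventually_ge_nhds (half_lt_self hω))
  obtain ⟨tK, htK⟩ := eventually_atBot.1
    (hsep.and ((haρ.eventually_ge_atTop (K / δ)).and (eventually_lt_atBot t₀)))
  refine ⟨tK, (htK tK le_rfl).2.2, fun t ht σ σ' hσ hσ' h₀ h₁ _ => ?_⟩
  obtain ⟨hsep_t, hKaρ, ht₀⟩ := htK t ht.le
  have ha := (hapos t ht₀).le
  have hρ := (hρpos t ht₀).le
  calc K = K / δ * δ := (div_mul_cancel₀ K (half_pos hω).ne').symm
    _ ≤ a t * ρ t * δ := by gcongr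
    _ ≤ a t * (ρ t * ‖‖x₁ t‖⁻¹ • x₁ t - ‖x₂ t‖⁻¹ • x₂ t‖) := by rw [mul_assoc]; gcongr
    _ ≤ a t * ‖x₁ t - x₂ t‖ := by
        gcongr; exact mul_norm_inv_smul_sub_le hρ (hx₁ t ht₀) (hx₂ t ht₀)
    _ ≤ a t * ∫ τ in (0 : ℝ)..1, ‖σ' τ‖ := by
        rw [norm_sub_rev, ← h₀, ← h₁]
        gcongr; exact norm_sub_le_integral_norm_of_hasDerivWithinAt zero_le_one hσ hσ'

/-- The geometric obstruction: if `a(t)·ρ(t) → ∞` as `t → -∞`, the points `x₁(t), x₂(t)` lie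
outside the ball of radius `ρ(t)` and their radial projections converge to two distinct
directions `ω₁ ≠ ω₂` on the unit sphere, then the distance between `x₁(t)` and `x₂(t)` in the
region `{‖x‖ ≥ ρ(t)}` with respect to the rescaled metric `a(t)²·(Euclidean)` diverges: for
every `K > 0`, for all sufficiently negative `t`, every `C¹` curve from `x₁(t)` to `x₂(t)`
staying outside the ball of radius `ρ(t)` has `a(t)·(Euclidean length) ≥ K`. -/
theorem stmt_9 (n : ℕ) (hn : 2 ≤ n) (t₀ : ℝ) (a ρ : ℝ → ℝ)
    (hapos : ∀ t < t₀, 0 < a t) (hρpos : ∀ t < t₀, 0 < ρ t)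
    (haρ : Tendsto (fun t => a t * ρ t) atBot atTop)
    (x₁ x₂ : ℝ → EuclideanSpace ℝ (Fin n))
    (hx₁ : ∀ t < t₀, ρ t ≤ ‖x₁ t‖) (hx₂ : ∀ t < t₀, ρ t ≤ ‖x₂ t‖)
    (ω₁ ω₂ : EuclideanSpace ℝ (Fin n)) (hω₁ : ‖ω₁‖ = 1) (hω₂ : ‖ω₂‖ = 1) (hne : ω₁ ≠ ω₂)
    (hlim₁ : Tendsto (fun t => (‖x₁ t‖)⁻¹ • x₁ t) atBot (nhds ω₁))
    (hlim₂ : Tendsto (fun t => (‖x₂ t‖)⁻¹ • x₂ t) atBot (nhds ω₂)) :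
    ∀ K > 0, ∃ tK < t₀, ∀ t < tK,
      ∀ σ σ' : ℝ → EuclideanSpace ℝ (Fin n),
        (∀ τ ∈ Set.Icc (0 : ℝ) 1, HasDerivWithinAt σ (σ' τ) (Set.Icc 0 1) τ) →
        ContinuousOn σ' (Set.Icc 0 1) →
        σ 0 = x₁ t → σ 1 = x₂ t →
        (∀ τ ∈ Set.Icc (0 : ℝ) 1, ρ t ≤ ‖σ τ‖) →
        K ≤ a t * ∫ τ in (0 : ℝ)..1, ‖σ' τ‖ :=
  stmt_9_general n t₀ a ρ hapos hρpos haρ x₁ x₂ hx₁ hx₂ ω₁ ω₂ hne hlim₁ hlim₂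
end

section
/- Let n ≥ 2 and let T*, T₀, u* be real numbers with T* < T₀ < u*. Let R : (T*, T₀] → ℝ and ω : (T*, T₀] → S^{n−1} ⊂ ℝⁿ be C¹ maps such that for every T ∈ (T*, T₀]: R′(T)² + R(T)²·‖ω′(T)‖² < 1 and R(T) ≥ u* − T. Then ω(T) converges in S^{n−1} as T → T*⁺ (i.e. the limit lim_{T → T*⁺} ω(T) exists). -/
open Set Filter Topology

/-! Timelikeness gives `R ‖ω'‖ < 1`, and since `R(T) ≥ u* - T ≥ u* - T₀ > 0`, the speed of `ω`
is bounded by `(u* - T₀)⁻¹` on `(T*, T₀]`. A curve of bounded speed is Lipschitz, hence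
uniformly continuous, so it is Cauchy as `T → T*⁺` and converges by completeness of `ℝⁿ`;
the limit lies on the sphere because the sphere is closed. -/

theorem UniformContinuousOn.exists_tendsto_nhdsWithin {α β : Type*} [UniformSpace α]
    [UniformSpace β] [CompleteSpace β] {f : α → β} {s : Set α} {a : α}
    (hf : UniformContinuousOn f s) (ha : a ∈ closure s) :
    ∃ L, Tendsto f (𝓝[s] a) (𝓝 L) :=
  haveI := mem_closure_iff_nhdsWithin_neBot.1 ha
  CompleteSpace.complete ((cauchy_nhds.mono nhdsWithin_le_nhds).map_of_le hf inf_le_right)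

theorem Convex.exists_tendsto_nhdsWithin_of_norm_hasDerivWithin_le {E : Type*}
    [NormedAddCommGroup E] [NormedSpace ℝ E] [CompleteSpace E] {f f' : ℝ → E} {s : Set ℝ}
    {a C : ℝ} (hs : Convex ℝ s) (hf : ∀ x ∈ s, HasDerivWithinAt f (f' x) s x)
    (bound : ∀ x ∈ s, ‖f' x‖ ≤ C) (ha : a ∈ closure s) :
    ∃ L, Tendsto f (𝓝[s] a) (𝓝 L) := by
  have hlip : LipschitzOnWith (Real.toNNReal C) f s :=
    LipschitzOnWith.of_dist_le' fun x hx y hy => by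
      simpa only [dist_eq_norm] using hs.norm_image_sub_le_of_norm_hasDerivWithin_le hf bound hy hx
  exact hlip.uniformContinuousOn.exists_tendsto_nhdsWithin ha

lemma le_inv_of_sq_add_sq_mul_sq_lt_one {a r c x : ℝ} (h : a ^ 2 + r ^ 2 * x ^ 2 < 1)
    (hc : 0 < c) (hcr : c ≤ r) (hx : 0 ≤ x) : x ≤ c⁻¹ := by
  have hrx : r * x < 1 := by nlinarith [sq_nonneg a, sq_nonneg (r * x - 1)]
  rw [← one_div, le_div_iff₀ hc]
  nlinarith [mul_le_mul_of_nonneg_left hcr hx]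

theorem stmt_10_general (n : ℕ) (Tstar T₀ ustar : ℝ)
    (hT : Tstar < T₀) (hu : T₀ < ustar)
    (R R' : ℝ → ℝ) (ω ω' : ℝ → EuclideanSpace ℝ (Fin n))
    (hω : ∀ T ∈ Set.Ioc Tstar T₀, HasDerivAt ω (ω' T) T)
    (hsphere : ∀ T ∈ Set.Ioc Tstar T₀, ‖ω T‖ = 1)
    (htimelike : ∀ T ∈ Set.Ioc Tstar T₀, R' T ^ 2 + R T ^ 2 * ‖ω' T‖ ^ 2 < 1)
    (hlower : ∀ T ∈ Set.Ioc Tstar T₀, ustar - T ≤ R T) :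
    ∃ L : EuclideanSpace ℝ (Fin n), ‖L‖ = 1 ∧
      Tendsto ω (nhdsWithin Tstar (Set.Ioi Tstar)) (nhds L) := by
  have hspeed : ∀ T ∈ Ioc Tstar T₀, ‖ω' T‖ ≤ (ustar - T₀)⁻¹ := fun T hT' =>
    le_inv_of_sq_add_sq_mul_sq_lt_one (htimelike T hT') (by linarith)
      (by linarith [hlower T hT', hT'.2]) (norm_nonneg _)
  obtain ⟨L, hL⟩ := (convex_Ioc Tstar T₀).exists_tendsto_nhdsWithin_of_norm_hasDerivWithin_le
    (fun T hT' => (hω T hT').hasDerivWithinAt) hspeed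
    (closure_Ioc hT.ne ▸ left_mem_Icc.2 hT.le)
  rw [nhdsWithin_Ioc_eq_nhdsGT hT] at hL
  have hL_sphere : L ∈ Metric.sphere 0 1 :=
    Metric.isClosed_sphere.mem_of_tendsto hL <| by
      filter_upwards [Ioc_mem_nhdsGT hT] with T hT'
      simpa using hsphere T hT'
  exact ⟨L, by simpa using hL_sphere, hL⟩

/-- The analytic core of Proposition (a)(iii): if `T ↦ (T, R(T), ω(T))` is a `C¹` curve on
`(T*, T₀]` with values satisfying `R'(T)² + R(T)²·‖ω'(T)‖² < 1` (timelikeness for the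
Einstein static metric) and `R(T) ≥ u* - T` with `T* < T₀ < u*`, then the spherical part
`ω(T)` converges in the unit sphere `S^{n-1}` as `T → T*⁺`. -/
theorem stmt_10 (n : ℕ) (hn : 2 ≤ n) (Tstar T₀ ustar : ℝ)
    (hT : Tstar < T₀) (hu : T₀ < ustar)
    (R R' : ℝ → ℝ) (ω ω' : ℝ → EuclideanSpace ℝ (Fin n))
    (hR : ∀ T ∈ Set.Ioc Tstar T₀, HasDerivAt R (R' T) T)
    (hω : ∀ T ∈ Set.Ioc Tstar T₀, HasDerivAt ω (ω' T) T)
    (hR' : ContinuousOn R' (Set.Ioc Tstar T₀))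
    (hω' : ContinuousOn ω' (Set.Ioc Tstar T₀))
    (hsphere : ∀ T ∈ Set.Ioc Tstar T₀, ‖ω T‖ = 1)
    (htimelike : ∀ T ∈ Set.Ioc Tstar T₀, R' T ^ 2 + R T ^ 2 * ‖ω' T‖ ^ 2 < 1)
    (hlower : ∀ T ∈ Set.Ioc Tstar T₀, ustar - T ≤ R T) :
    ∃ L : EuclideanSpace ℝ (Fin n), ‖L‖ = 1 ∧
      Tendsto ω (nhdsWithin Tstar (Set.Ioi Tstar)) (nhds L) :=
  stmt_10_general n Tstar T₀ ustar hT hu R R' ω ω' hω hsphere htimelike hlower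
end
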